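/- Fix r ∈ (0,1). For all α ∈ [0, π], the function f(α) = α − 2·arctan(r·sin α/(1 + r·cos α)) satisfies the lower bound f(α) ≥ ((1 − r)/(1 + r))·α. -/

import Mathlib

open Real

/-!
The derivative of `α ↦ arctan (r sin α / (1 + r cos α))` is `r (cos α + r) / (1 + 2 r cos α + r²)`,
which for `0 ≤ r < 1` is at most `r / (1 + r)` (its maximum, at `α = 0`). Hence
`α - 2 arctan (…) - (1 - r) / (1 + r) * α` has nonnegative derivative, so it is monotone,
and it vanishes at `α = 0`.
-/

section

variable {r : ℝ}

lemma one_add_mul_cos_pos (hr : |r| < 1) (x : ℝ) : 0 < 1 + r * cos x := by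
  have : |r * cos x| < 1 := by
    rw [abs_mul]
    exact lt_of_le_of_lt (mul_le_of_le_one_right (abs_nonneg r) (abs_cos_le_one x)) hr
  linarith [neg_abs_le (r * cos x)]

lemma one_add_two_mul_cos_add_sq_pos (hr : |r| < 1) (x : ℝ) :
    0 < 1 + 2 * r * cos x + r ^ 2 := by
  have h := one_add_mul_cos_pos hr x
  nlinarith [sin_sq_add_cos_sq x, sq_nonneg (r * sin x)]

lemma hasDerivAt_arctan_mul_sin_div (hr : |r| < 1) (x : ℝ) :
    HasDerivAt (fun α => arctan (r * sin α / (1 + r * cos α)))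
      (r * (cos x + r) / (1 + 2 * r * cos x + r ^ 2)) x := by
  have hc := one_add_mul_cos_pos hr x
  have hq : HasDerivAt (fun α => r * sin α / (1 + r * cos α))
      (r * (cos x + r) / (1 + r * cos x) ^ 2) x := by
    refine (((hasDerivAt_sin x).const_mul r).div
      (((hasDerivAt_cos x).const_mul r).const_add 1) hc.ne').congr_deriv ?_
    congr 1
    linear_combination r ^ 2 * sin_sq_add_cos_sq x
  have h_one_add_sq : 1 + (r * sin x / (1 + r * cos x)) ^ 2
      = (1 + 2 * r * cos x + r ^ 2) / (1 + r * cos x) ^ 2 := by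
    field_simp
    linear_combination r ^ 2 * sin_sq_add_cos_sq x
  convert hq.arctan using 1
  rw [h_one_add_sq]
  field_simp

lemma mul_cos_add_div_le (hr0 : 0 ≤ r) (hr1 : r < 1) (x : ℝ) :
    r * (cos x + r) / (1 + 2 * r * cos x + r ^ 2) ≤ r / (1 + r) := by
  have hD := one_add_two_mul_cos_add_sq_pos (abs_lt.2 ⟨by linarith, hr1⟩) x
  rw [div_le_div_iff₀ hD (by linarith)]
  nlinarith [mul_nonneg (mul_nonneg hr0 (sub_nonneg.2 hr1.le)) (sub_nonneg.2 (cos_le_one x))]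

lemma monotone_sub_two_arctan_mul_sin_div_sub_mul (hr0 : 0 ≤ r) (hr1 : r < 1) :
    Monotone fun α => α - 2 * arctan (r * sin α / (1 + r * cos α)) - (1 - r) / (1 + r) * α := by
  have hr : |r| < 1 := abs_lt.2 ⟨by linarith, hr1⟩
  have hderiv (x : ℝ) : HasDerivAt
      (fun α => α - 2 * arctan (r * sin α / (1 + r * cos α)) - (1 - r) / (1 + r) * α)
      (1 - 2 * (r * (cos x + r) / (1 + 2 * r * cos x + r ^ 2)) - (1 - r) / (1 + r)) x :=
    (((hasDerivAt_id' x).sub ((hasDerivAt_arctan_mul_sin_div hr x).const_mul 2)).sub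
      ((hasDerivAt_id' x).const_mul ((1 - r) / (1 + r)))).congr_deriv (by rw [mul_one])
  refine monotone_of_deriv_nonneg (fun x => (hderiv x).differentiableAt) fun x => ?_
  rw [(hderiv x).deriv]
  have hslope : (1 - r) / (1 + r) = 1 - 2 * (r / (1 + r)) := by
    field_simp
    ring
  linarith [mul_cos_add_div_le hr0 hr1 x]

end

/-- For `r ∈ (0,1)` and `α ∈ [0,π]`,
`f(α) = α − 2 arctan(r sin α/(1 + r cos α)) ≥ ((1−r)/(1+r))·α`. -/
theorem larmor_arc_lower_bound (r : ℝ) (hr0 : 0 < r) (hr1 : r < 1)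
    (f : ℝ → ℝ)
    (hf : ∀ α, f α = α - 2 * Real.arctan (r * Real.sin α / (1 + r * Real.cos α))) :
    ∀ α ∈ Set.Icc (0 : ℝ) Real.pi, (1 - r) / (1 + r) * α ≤ f α := by
  intro α hα
  have h := monotone_sub_two_arctan_mul_sin_div_sub_mul hr0.le hr1 hα.1
  simp only [sin_zero, mul_zero, zero_div, arctan_zero, sub_self] at h
  linarith [hf α]
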